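/- Let X be a random vector in ℝ^d with ‖X‖ ≤ r almost surely for some r > 0, and let C > 0. Then for every closed set A ⊆ ℝ^d, lim_{m→∞} inf_{v∈A} sup_{λ∈ℝ^d} {⟨λ, v⟩ − Ψ(λ) − C m^{−1/2} ‖λ‖²} = inf_{v∈A} sup_{λ∈ℝ^d} {⟨λ, v⟩ − Ψ(λ)}, the equality holding in the extended reals [0, ∞]. -/
import Mathlib


open MeasureTheory ProbabilityTheory Real Filter
open scoped RealInnerProductSpace

noncomputable section

abbrev Euc (d : ℕ) : Type := EuclideanSpace ℝ (Fin d)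

open scoped NNReal ENNReal in
lemma aux_abs_integrable : Integrable (fun z : ℝ => |z|) (gaussianReal 0 1) := by
  rw [gaussianReal_of_var_ne_zero 0 one_ne_zero,
    integrable_withDensity_iff (measurable_gaussianPDF 0 1)
      (Filter.Eventually.of_forall fun x => ENNReal.ofReal_lt_top)]
  have h : Integrable (fun x : ℝ => (√(2*π))⁻¹ * |x * rexp (-2⁻¹ * x ^ 2)|) volume :=
    ((integrable_mul_exp_neg_mul_sq (by norm_num : (0:ℝ) < 2⁻¹)).abs).const_mul _
  refine h.congr (Filter.Eventually.of_forall fun x => ?_)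
  have h1 : (gaussianPDF 0 1 x).toReal = gaussianPDFReal 0 1 x :=
    ENNReal.toReal_ofReal (gaussianPDFReal_nonneg 0 1 x)
  have h2 : gaussianPDFReal 0 1 x = (√(2*π))⁻¹ * rexp (-2⁻¹ * x ^ 2) := by
    rw [gaussianPDFReal]
    norm_num
    left
    ring
  show (√(2*π))⁻¹ * |x * rexp (-2⁻¹ * x ^ 2)| = |x| * (gaussianPDF 0 1 x).toReal
  rw [h1, h2, abs_mul, abs_of_pos (exp_pos _)]
  ring

lemma aux_log_mgf_bound {Ω : Type*} [MeasurableSpace Ω] (P : Measure Ω) [IsProbabilityMeasure P]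
    {d : ℕ} (X : Ω → Euc d) (hXmeas : Measurable X)
    (r : ℝ) (hXbdd : ∀ᵐ ω ∂P, ‖X ω‖ ≤ r) (l : Euc d) :
    |Real.log (∫ ω, Real.exp ⟪l, X ω⟫ ∂P)| ≤ r * ‖l‖ := by
  have hmeas : Measurable fun ω => rexp ⟪l, X ω⟫ := (measurable_const.inner hXmeas).exp
  have hb : ∀ᵐ ω ∂P, |⟪l, X ω⟫| ≤ r * ‖l‖ := by
    filter_upwards [hXbdd] with ω hω
    calc |⟪l, X ω⟫| ≤ ‖l‖ * ‖X ω‖ := abs_real_inner_le_norm l (X ω)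
    _ ≤ ‖l‖ * r := by exact mul_le_mul_of_nonneg_left hω (norm_nonneg _)
    _ = r * ‖l‖ := mul_comm _ _
  have hint : Integrable (fun ω => rexp ⟪l, X ω⟫) P := by
    refine Integrable.mono' (integrable_const (rexp (r * ‖l‖))) hmeas.aestronglyMeasurable ?_
    filter_upwards [hb] with ω hω
    rw [Real.norm_eq_abs, abs_of_pos (exp_pos _)]
    exact Real.exp_le_exp.2 ((abs_le.1 hω).2)
  have hlow : rexp (-(r * ‖l‖)) ≤ ∫ ω, rexp ⟪l, X ω⟫ ∂P := by
    have : ∫ _ : Ω, rexp (-(r * ‖l‖)) ∂P ≤ ∫ ω, rexp ⟪l, X ω⟫ ∂P := by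
      refine integral_mono_ae (integrable_const _) hint ?_
      filter_upwards [hb] with ω hω
      exact Real.exp_le_exp.2 ((abs_le.1 hω).1)
    simpa using this
  have hup : ∫ ω, rexp ⟪l, X ω⟫ ∂P ≤ rexp (r * ‖l‖) := by
    have : ∫ ω, rexp ⟪l, X ω⟫ ∂P ≤ ∫ _ : Ω, rexp (r * ‖l‖) ∂P := by
      refine integral_mono_ae hint (integrable_const _) ?_
      filter_upwards [hb] with ω hω
      exact Real.exp_le_exp.2 ((abs_le.1 hω).2)
    simpa using this
  have hpos : 0 < ∫ ω, rexp ⟪l, X ω⟫ ∂P := lt_of_lt_of_le (exp_pos _) hlow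
  rw [abs_le]
  constructor
  · have := Real.log_le_log (exp_pos _) hlow
    rwa [Real.log_exp] at this
  · have := Real.log_le_log hpos hup
    rwa [Real.log_exp] at this

lemma aux_real1 (C a x ψ : ℝ) (hC : 0 < C) (hψ : ψ ≤ a * ((2*C)⁻¹ * x)) :
    (4*C)⁻¹ * x^2 - a * ((2*C)⁻¹ * x) ≤ (2*C)⁻¹ * x^2 - ψ - C * ((2*C)⁻¹ * x)^2 := by
  have hC' : C ≠ 0 := ne_of_gt hC
  have h : C * ((2*C)⁻¹ * x)^2 = (4*C)⁻¹ * x^2 := by field_simp; ring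
  have h2 : (2*C)⁻¹ * x^2 = (4*C)⁻¹ * x^2 + (4*C)⁻¹ * x^2 := by field_simp; ring
  rw [h, h2]
  linarith

lemma aux_real2 (C a c x : ℝ) (hC : 0 < C) (ha0 : 0 ≤ a) (hx0 : 0 ≤ x)
    (h : (4*C)⁻¹ * x^2 - a * ((2*C)⁻¹ * x) ≤ c) : x ≤ 2*a + 4*C*(|c|+1) + 1 := by
  have hC' : C ≠ 0 := ne_of_gt hC
  have h' : x^2 - 2*a*x ≤ 4*C*c := by
    have hm := mul_le_mul_of_nonneg_left h (le_of_lt (by positivity : (0:ℝ) < 4*C))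
    calc x^2 - 2*a*x = 4*C*((4*C)⁻¹ * x^2 - a * ((2*C)⁻¹ * x)) := by field_simp; ring
    _ ≤ 4*C*c := hm
  by_contra hx
  push_neg at hx
  have k1 : 0 ≤ 4*C*(|c|+1) := by positivity
  have hx1 : 1 ≤ x := by linarith
  have hxa : 4*C*(|c|+1)+1 ≤ x - 2*a := by linarith
  have k2 : 4*C*(|c|+1)+1 ≤ x^2 - 2*a*x := by
    nlinarith [mul_nonneg (by linarith : (0:ℝ) ≤ x - 1)
      (by linarith : (0:ℝ) ≤ x - 2*a - (4*C*(|c|+1)+1))]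
  have k3 : 4*C*c ≤ 4*C*|c| := mul_le_mul_of_nonneg_left (le_abs_self c) (by positivity)
  nlinarith

lemma aux_main {d : ℕ} (Ψ : Euc d → ℝ) (a : ℝ) (ha0 : 0 ≤ a)
    (hΨbd : ∀ l : Euc d, |Ψ l| ≤ a * ‖l‖)
    (C : ℝ) (hC : 0 < C) (ε : ℕ → ℝ) (hεanti : Antitone ε) (hεpos : ∀ m, 0 ≤ ε m)
    (hεC : ∀ m, ε m ≤ C) (hεto : Filter.Tendsto ε Filter.atTop (nhds 0))
    (A : Set (Euc d)) (hA : IsClosed A) :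
    Filter.Tendsto (fun m => ⨅ v ∈ A, ⨆ l : Euc d, ((⟪l, v⟫ - Ψ l - ε m * ‖l‖ ^ 2 : ℝ) : EReal))
      Filter.atTop (nhds (⨅ v ∈ A, ⨆ l : Euc d, ((⟪l, v⟫ - Ψ l : ℝ) : EReal))) := by
  classical
  let F : ℕ → Euc d → EReal :=
    fun m v => ⨆ l : Euc d, ((⟪l, v⟫ - Ψ l - ε m * ‖l‖ ^ 2 : ℝ) : EReal)
  let Ftop : Euc d → EReal := fun v => ⨆ l : Euc d, ((⟪l, v⟫ - Ψ l : ℝ) : EReal)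
  let Flow : Euc d → EReal := fun v => ⨆ l : Euc d, ((⟪l, v⟫ - Ψ l - C * ‖l‖ ^ 2 : ℝ) : EReal)
  show Filter.Tendsto (fun m => ⨅ v ∈ A, F m v) Filter.atTop (nhds (⨅ v ∈ A, Ftop v))
  have hFmono : ∀ v, Monotone fun m => F m v := by
    intro v m n hmn
    refine iSup_mono fun l => EReal.coe_le_coe_iff.2 ?_
    have h2 : ε n * ‖l‖ ^ 2 ≤ ε m * ‖l‖ ^ 2 :=
      mul_le_mul_of_nonneg_right (hεanti hmn) (sq_nonneg _)
    linarith
  have hFle : ∀ m v, F m v ≤ Ftop v := by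
    intro m v
    refine iSup_mono fun l => EReal.coe_le_coe_iff.2 ?_
    have : 0 ≤ ε m * ‖l‖ ^ 2 := mul_nonneg (hεpos m) (sq_nonneg _)
    linarith
  have hlowle : ∀ m v, Flow v ≤ F m v := by
    intro m v
    refine iSup_mono fun l => EReal.coe_le_coe_iff.2 ?_
    have : ε m * ‖l‖ ^ 2 ≤ C * ‖l‖ ^ 2 := mul_le_mul_of_nonneg_right (hεC m) (sq_nonneg _)
    linarith
  have hsup : ∀ v, (⨆ m, F m v) = Ftop v := by
    intro v
    show (⨆ m, ⨆ l : Euc d, ((⟪l, v⟫ - Ψ l - ε m * ‖l‖ ^ 2 : ℝ) : EReal))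
      = ⨆ l : Euc d, ((⟪l, v⟫ - Ψ l : ℝ) : EReal)
    rw [iSup_comm]
    refine iSup_congr fun l => ?_
    have hmono : Monotone fun m => ((⟪l, v⟫ - Ψ l - ε m * ‖l‖ ^ 2 : ℝ) : EReal) := by
      intro m n hmn
      refine EReal.coe_le_coe_iff.2 ?_
      have h2 : ε n * ‖l‖ ^ 2 ≤ ε m * ‖l‖ ^ 2 :=
        mul_le_mul_of_nonneg_right (hεanti hmn) (sq_nonneg _)
      linarith
    have t1 := tendsto_atTop_iSup hmono
    have t2 : Filter.Tendsto (fun m => ((⟪l, v⟫ - Ψ l - ε m * ‖l‖ ^ 2 : ℝ) : EReal))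
        Filter.atTop (nhds ((⟪l, v⟫ - Ψ l : ℝ) : EReal)) := by
      have h3 : Filter.Tendsto (fun m => ⟪l, v⟫ - Ψ l - ε m * ‖l‖ ^ 2) Filter.atTop
          (nhds (⟪l, v⟫ - Ψ l - 0 * ‖l‖ ^ 2)) :=
        tendsto_const_nhds.sub (hεto.mul_const _)
      rw [zero_mul, sub_zero] at h3
      exact (continuous_coe_real_ereal.tendsto _).comp h3
    exact tendsto_nhds_unique t1 t2
  have hImono : Monotone fun m => ⨅ v ∈ A, F m v := by
    intro m n hmn
    exact iInf₂_mono fun v _ => hFmono v hmn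
  have hkey : (⨆ m, ⨅ v ∈ A, F m v) = ⨅ v ∈ A, Ftop v := by
    rcases A.eq_empty_or_nonempty with rfl | hAne
    · simp
    refine le_antisymm (iSup_le fun m => iInf₂_mono fun v _ => hFle m v) ?_
    by_contra hcon
    rw [not_le] at hcon
    obtain ⟨c, hLc, hcS⟩ := EReal.lt_iff_exists_real_btwn.1 hcon
    set R : ℝ := 2*a + 4*C*(|c|+1) + 1 with hR
    set K : ℕ → Set (Euc d) := fun m => A ∩ (F m) ⁻¹' (Set.Iic (c : EReal)) with hK
    have hlsc : ∀ m, LowerSemicontinuous (F m) := by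
      intro m
      refine lowerSemicontinuous_iSup fun l => Continuous.lowerSemicontinuous ?_
      exact continuous_coe_real_ereal.comp
        (((continuous_const.inner continuous_id).sub continuous_const).sub continuous_const)
    have hKclosed : ∀ m, IsClosed (K m) := fun m => hA.inter ((hlsc m).isClosed_preimage _)
    have hcoer : ∀ v : Euc d,
        (((4*C)⁻¹ * ‖v‖^2 - a * ((2*C)⁻¹ * ‖v‖) : ℝ) : EReal) ≤ Flow v := by
      intro v
      have ht : (0:ℝ) < (2*C)⁻¹ := by positivity
      refine le_trans ?_ (le_iSup
        (fun l : Euc d => ((⟪l, v⟫ - Ψ l - C * ‖l‖ ^ 2 : ℝ) : EReal)) ((2*C)⁻¹ • v))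
      refine EReal.coe_le_coe_iff.2 ?_
      have h1 : ‖(2*C)⁻¹ • v‖ = (2*C)⁻¹ * ‖v‖ := by
        rw [norm_smul, Real.norm_eq_abs, abs_of_pos ht]
      have h2 : ⟪(2*C)⁻¹ • v, v⟫ = (2*C)⁻¹ * ‖v‖^2 := by
        rw [real_inner_smul_left, real_inner_self_eq_norm_sq]
      have h3 : Ψ ((2*C)⁻¹ • v) ≤ a * ((2*C)⁻¹ * ‖v‖) := by
        rw [← h1]
        exact le_trans (le_abs_self _) (hΨbd _)
      rw [h2, h1]
      exact aux_real1 C a ‖v‖ _ hC h3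
    have hKball : ∀ m, K m ⊆ Metric.closedBall 0 R := by
      intro m v hv
      have h1 : Flow v ≤ (c : EReal) := le_trans (hlowle m v) hv.2
      have h2 := le_trans (hcoer v) h1
      have h3 : (4*C)⁻¹ * ‖v‖^2 - a * ((2*C)⁻¹ * ‖v‖) ≤ c := EReal.coe_le_coe_iff.1 h2
      rw [Metric.mem_closedBall, dist_zero_right]
      exact aux_real2 C a c ‖v‖ hC ha0 (norm_nonneg v) h3
    have hKne : ∀ m, (K m).Nonempty := by
      intro m
      have hle : (⨅ v ∈ A, F m v) ≤ ⨆ m, ⨅ v ∈ A, F m v :=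
        le_iSup (fun m => ⨅ v ∈ A, F m v) m
      have h : (⨅ v ∈ A, F m v) < (c : EReal) := lt_of_le_of_lt hle hLc
      obtain ⟨v, hvlt⟩ := iInf_lt_iff.1 h
      obtain ⟨hvA, hlt⟩ := iInf_lt_iff.1 hvlt
      exact ⟨v, hvA, le_of_lt hlt⟩
    have hKcompact : IsCompact (K 0) :=
      (isCompact_closedBall (0 : Euc d) R).of_isClosed_subset (hKclosed 0) (hKball 0)
    have hKmono : ∀ m, K (m+1) ⊆ K m := by
      intro m v hv
      exact ⟨hv.1, le_trans (hFmono v (Nat.le_succ m)) hv.2⟩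
    obtain ⟨v, hv⟩ := IsCompact.nonempty_iInter_of_sequence_nonempty_isCompact_isClosed K
      hKmono hKne hKcompact hKclosed
    have hvA : v ∈ A := (Set.mem_iInter.1 hv 0).1
    have hvle : Ftop v ≤ (c : EReal) := by
      rw [← hsup v]
      exact iSup_le fun m => (Set.mem_iInter.1 hv m).2
    have hfin : (⨅ v ∈ A, Ftop v) ≤ (c : EReal) := le_trans (iInf₂_le v hvA) hvle
    exact absurd hcS (not_lt.2 hfin)
  have hfinal := tendsto_atTop_iSup hImono
  rwa [hkey] at hfinal

theorem inf_regularized_sup_tendsto_inf_Psi_star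
    {Ω : Type*} [MeasurableSpace Ω] (P : Measure Ω) [IsProbabilityMeasure P]
    {d : ℕ} (X : Ω → Euc d) (hXmeas : Measurable X)
    (r : ℝ) (hr : 0 < r) (hXbdd : ∀ᵐ ω ∂P, ‖X ω‖ ≤ r)
    (C : ℝ) (hC : 0 < C)
    (Λ : Euc d → ℝ) (hΛ : Λ = fun l => Real.log (∫ ω, Real.exp ⟪l, X ω⟫ ∂P))
    (Ψ : Euc d → ℝ) (hΨ : Ψ = fun l => ∫ z, Λ (z • l) ∂(gaussianReal 0 1))
    (A : Set (Euc d)) (hA : IsClosed A) :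
    Filter.Tendsto
      (fun m : ℕ => ⨅ v ∈ A, ⨆ l : Euc d,
        ((⟪l, v⟫ - Ψ l - C * (Real.sqrt (m + 1))⁻¹ * ‖l‖ ^ 2 : ℝ) : EReal))
      Filter.atTop
      (nhds (⨅ v ∈ A, ⨆ l : Euc d, ((⟪l, v⟫ - Ψ l : ℝ) : EReal))) := by
  have hΛbd : ∀ l : Euc d, |Λ l| ≤ r * ‖l‖ := by
    intro l
    simp only [hΛ]
    exact aux_log_mgf_bound P X hXmeas r hXbdd l
  have ha0 : 0 ≤ r * ∫ z, |z| ∂(gaussianReal 0 1) :=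
    mul_nonneg hr.le (integral_nonneg fun z => abs_nonneg z)
  have hΨbd : ∀ l : Euc d, |Ψ l| ≤ (r * ∫ z, |z| ∂(gaussianReal 0 1)) * ‖l‖ := by
    intro l
    simp only [hΨ]
    have hint : Integrable (fun z : ℝ => r * ‖l‖ * |z|) (gaussianReal 0 1) :=
      aux_abs_integrable.const_mul _
    have hb : ∀ᵐ z ∂(gaussianReal 0 1), ‖Λ (z • l)‖ ≤ r * ‖l‖ * |z| := by
      refine Filter.Eventually.of_forall fun z => ?_
      rw [Real.norm_eq_abs]
      calc |Λ (z • l)| ≤ r * ‖z • l‖ := hΛbd _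
      _ = r * ‖l‖ * |z| := by rw [norm_smul, Real.norm_eq_abs]; ring
    have hle := norm_integral_le_of_norm_le hint hb
    rw [Real.norm_eq_abs] at hle
    calc |∫ z, Λ (z • l) ∂(gaussianReal 0 1)|
        ≤ ∫ z, r * ‖l‖ * |z| ∂(gaussianReal 0 1) := hle
    _ = (r * ∫ z, |z| ∂(gaussianReal 0 1)) * ‖l‖ := by
        rw [integral_const_mul]; ring
  have hεpos : ∀ m : ℕ, 0 ≤ C * (Real.sqrt (m + 1))⁻¹ := fun m => by positivity
  have hεC : ∀ m : ℕ, C * (Real.sqrt (m + 1))⁻¹ ≤ C := by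
    intro m
    have h1 : (1:ℝ) ≤ Real.sqrt (m + 1) :=
      Real.one_le_sqrt.2 (le_add_of_nonneg_left (Nat.cast_nonneg m))
    nlinarith [inv_le_one_of_one_le₀ h1]
  have hεanti : Antitone fun m : ℕ => C * (Real.sqrt (m + 1))⁻¹ := by
    intro m n hmn
    have h1 : (0:ℝ) < Real.sqrt (m + 1) := Real.sqrt_pos.2 (by positivity)
    have h2 : Real.sqrt (m + 1) ≤ Real.sqrt (n + 1) := by
      apply Real.sqrt_le_sqrt
      have := (Nat.cast_le (α := ℝ)).2 hmn
      linarith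
    exact mul_le_mul_of_nonneg_left (inv_anti₀ h1 h2) hC.le
  have hεto : Filter.Tendsto (fun m : ℕ => C * (Real.sqrt (m + 1))⁻¹)
      Filter.atTop (nhds 0) := by
    have h1 : Filter.Tendsto (fun m : ℕ => ((m:ℝ) + 1) ^ (1/2 : ℝ)) Filter.atTop Filter.atTop :=
      (tendsto_rpow_atTop (by norm_num)).comp
        (tendsto_atTop_add_const_right atTop 1 tendsto_natCast_atTop_atTop)
    have h2 : Filter.Tendsto (fun m : ℕ => Real.sqrt ((m:ℝ) + 1)) Filter.atTop Filter.atTop :=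
      h1.congr fun m => (Real.sqrt_eq_rpow _).symm
    have h3 := h2.inv_tendsto_atTop
    have h4 := h3.const_mul C
    simpa using h4
  exact aux_main Ψ (r * ∫ z, |z| ∂(gaussianReal 0 1)) ha0 hΨbd C hC
    (fun m => C * (Real.sqrt (m + 1))⁻¹) hεanti hεpos hεC hεto A hA

end
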